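/- Let U be a real normed space, let λ_1,…,λ_M ∈ U* be continuous linear functionals and u_1,…,u_M ∈ U elements with λ_k(u_j) = δ_{jk}, and let R(f) = Σ_{j=1}^M λ_j(f)·u_j be the associated interpolatory recovery map. Assume the bounded-error property ‖f − R(f)‖_U ≤ ‖f‖_U for all f ∈ U. Let μ ∈ U* admit at least one bump function (some f₀ ∈ U with μ(f₀) = 1 and λ_j(f₀) = 0 for all j). Then the trade-off principle holds with equality: (sup over ‖f‖_U ≤ 1 of |μ(f) − μ(R(f))|) · (inf over all bump functions f of ‖f‖_U) = 1. -/

import Mathlib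

/-!
The error functional `f ↦ μ (f - R f)` only sees the residual `g = f - R f`, which is annihilated by
every `λⱼ` and, by the bounded-error property, has norm at most `‖f‖`. Rescaling a residual with
`μ g ≠ 0` to `(μ g)⁻¹ • g` gives a bump function of norm at most `|μ g|⁻¹`, so the power function is
at most the reciprocal of the minimal bump norm. Conversely a normalized bump function `f / ‖f‖` is
reproduced as `0` by `R`, so its error is `1 / ‖f‖`, giving the reverse inequality.
-/

theorem sSup_mul_sInf_eq_one {S T : Set ℝ} (hS : BddAbove S) (hT : T.Nonempty)
    (hT_pos : ∀ t ∈ T, 0 < t) (hinv_mem : ∀ t ∈ T, t⁻¹ ∈ S)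
    (hle_inv : ∀ r ∈ S, 0 < r → ∃ t ∈ T, t ≤ r⁻¹) :
    sSup S * sInf T = 1 := by
  obtain ⟨t₀, ht₀⟩ := hT
  have hs_pos : 0 < sSup S :=
    (inv_pos.2 (hT_pos t₀ ht₀)).trans_le (le_csSup hS (hinv_mem t₀ ht₀))
  have hm_ge : (sSup S)⁻¹ ≤ sInf T := le_csInf ⟨t₀, ht₀⟩ fun t ht => by
    rw [inv_le_comm₀ hs_pos (hT_pos t ht)]
    exact le_csSup hS (hinv_mem t ht)
  have hm_pos : 0 < sInf T := (inv_pos.2 hs_pos).trans_le hm_ge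
  have hs_le : sSup S ≤ (sInf T)⁻¹ := csSup_le ⟨_, hinv_mem t₀ ht₀⟩ fun r hr => by
    rcases le_or_gt r 0 with hr0 | hr0
    · exact hr0.trans (inv_pos.2 hm_pos).le
    obtain ⟨t, ht, htr⟩ := hle_inv r hr hr0
    rw [le_inv_comm₀ hr0 hm_pos]
    exact (csInf_le ⟨0, fun t ht => (hT_pos t ht).le⟩ ht).trans htr
  apply le_antisymm
  · simpa [inv_mul_cancel₀ hm_pos.ne'] using mul_le_mul_of_nonneg_right hs_le hm_pos.le
  · simpa [mul_inv_cancel₀ hs_pos.ne'] using mul_le_mul_of_nonneg_left hm_ge hs_pos.le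

section Recovery

variable {R U ι : Type*} [Ring R] [TopologicalSpace R] [TopologicalSpace U] [AddCommGroup U]
  [Module R U] [Fintype ι] [DecidableEq ι] {lam : ι → U →L[R] R} {u : ι → U}

theorem apply_sum_smul_of_lagrange (hLag : ∀ j k, lam k (u j) = if j = k then 1 else 0)
    (f : U) (k : ι) : lam k (∑ j, lam j f • u j) = lam k f := by
  simp [map_sum, hLag]

theorem apply_sub_sum_smul_of_lagrange (hLag : ∀ j k, lam k (u j) = if j = k then 1 else 0)
    (f : U) (k : ι) : lam k (f - ∑ j, lam j f • u j) = 0 := by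
  rw [map_sub, apply_sum_smul_of_lagrange hLag, sub_self]

end Recovery

/-- Trade-off principle with equality: for an interpolatory recovery
`R f = ∑ j, lam j f • u j` with the bounded-error property, if `μ` admits a bump
function, then the power function of `μ` times the minimal norm of a bump
function for `μ` equals `1`. -/
theorem trade_off_principle_with_equality
    {U : Type*} [NormedAddCommGroup U] [NormedSpace ℝ U]
    (M : ℕ) (lam : Fin M → (U →L[ℝ] ℝ)) (u : Fin M → U)
    (hLag : ∀ j k, lam k (u j) = if j = k then 1 else 0)
    (hbe : ∀ f : U, ‖f - ∑ j, lam j f • u j‖ ≤ ‖f‖)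
    (μ : U →L[ℝ] ℝ)
    (f₀ : U) (hμf₀ : μ f₀ = 1) (hlamf₀ : ∀ j, lam j f₀ = 0) :
    sSup {r : ℝ | ∃ f : U, ‖f‖ ≤ 1 ∧ r = |μ f - μ (∑ j, lam j f • u j)|}
      * sInf {r : ℝ | ∃ f : U, μ f = 1 ∧ (∀ j, lam j f = 0) ∧ r = ‖f‖} = 1 := by
  have hres_norm (f : U) (hf : ‖f‖ ≤ 1) : ‖f - ∑ j, lam j f • u j‖ ≤ 1 := (hbe f).trans hf
  have hbump_pos (f : U) (hμf : μ f = 1) : 0 < ‖f‖ :=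
    norm_pos_iff.2 fun h => by simp [h] at hμf
  apply sSup_mul_sInf_eq_one
  · refine ⟨‖μ‖, ?_⟩
    rintro _ ⟨f, hf, rfl⟩
    rw [← map_sub, ← Real.norm_eq_abs]
    simpa using μ.le_opNorm_of_le (hres_norm f hf)
  · exact ⟨_, f₀, hμf₀, hlamf₀, rfl⟩
  · rintro _ ⟨f, hμf, -, rfl⟩
    exact hbump_pos f hμf
  · rintro _ ⟨f, hμf, hlamf, rfl⟩
    have hf := hbump_pos f hμf
    refine ⟨‖f‖⁻¹ • f, by simp [norm_smul, hf.ne'], ?_⟩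
    simp [hμf, hlamf]
  · rintro _ ⟨f, hf, rfl⟩ hpos
    rw [← map_sub] at hpos ⊢
    set g := f - ∑ j, lam j f • u j with hg
    have hμg : μ g ≠ 0 := abs_pos.1 hpos
    refine ⟨_, ⟨(μ g)⁻¹ • g, by simp [hμg], fun j => ?_, rfl⟩, ?_⟩
    · simp [hg, apply_sub_sum_smul_of_lagrange hLag]
    · calc ‖(μ g)⁻¹ • g‖ = |μ g|⁻¹ * ‖g‖ := by simp [norm_smul]
        _ ≤ |μ g|⁻¹ := mul_le_of_le_one_right (inv_pos.2 hpos).le (hres_norm f hf)
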